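/- Let p > 0, and let a, m, n ∈ ℕ. Let I be a collection of m pairwise disjoint nonempty subsets of [n], each of size at most a. Let A₁,…,Aₙ be {0,1}-valued random variables such that for every I ∈ I and every k ∈ I, the probability that A_k = 1, conditioned on any outcome of A₁,…,A_{k−1} in which all variables indexed by [k−1] ∩ I equal 1, is at least p. Then P[ |{I ∈ I : Aᵢ = 1 for all i ∈ I}| ≥ (1/2)p^a·m ] ≥ 1 − 2·exp(−(1/12)p^a·m). -/
import Mathlib


open MeasureTheory Finset
open scoped Classical ENNReal

/-- The event that, among the variables `A_j` with `j < k`, exactly those with `j ∈ J`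
occur. -/
def histEvent {Ω : Type*} {n : ℕ} (E : Fin n → Set Ω) (k : Fin n)
    (J : Finset (Fin n)) : Set Ω :=
  { ω | ∀ j : Fin n, j < k → (ω ∈ E j ↔ j ∈ J) }

section Aux

variable {Ω : Type*} [MeasurableSpace Ω] {n : ℕ}

/-- History event with a natural-number cutoff. -/
def histN (E : Fin n → Set Ω) (k : ℕ) (J : Finset (Fin n)) : Set Ω :=
  { ω | ∀ j : Fin n, (j : ℕ) < k → (ω ∈ E j ↔ j ∈ J) }

lemma histEvent_eq_histN (E : Fin n → Set Ω) (k : Fin n) (J : Finset (Fin n)) :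
    histEvent E k J = histN E (k : ℕ) J := rfl

lemma measurableSet_histN {E : Fin n → Set Ω} (hmeas : ∀ i, MeasurableSet (E i))
    (k : ℕ) (J : Finset (Fin n)) : MeasurableSet (histN E k J) := by
  have h : histN E k J = ⋂ j : Fin n, { ω | (j : ℕ) < k → (ω ∈ E j ↔ j ∈ J) } := by
    ext ω; simp [histN, Set.mem_iInter]
  rw [h]
  refine MeasurableSet.iInter fun j => ?_
  by_cases hj : (j : ℕ) < k
  · by_cases hJ : j ∈ J
    · have : { ω : Ω | (j : ℕ) < k → (ω ∈ E j ↔ j ∈ J) } = E j := by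
        ext ω; simp [hj, hJ]
      rw [this]; exact hmeas j
    · have : { ω : Ω | (j : ℕ) < k → (ω ∈ E j ↔ j ∈ J) } = (E j)ᶜ := by
        ext ω; simp [hj, hJ]
      rw [this]; exact (hmeas j).compl
  · have : { ω : Ω | (j : ℕ) < k → (ω ∈ E j ↔ j ∈ J) } = Set.univ := by
      ext ω; simp [hj]
    rw [this]; exact MeasurableSet.univ

lemma histN_succ_inter (E : Fin n → Set Ω) {k : ℕ} (hk : k < n) {J : Finset (Fin n)}
    (hJ : ∀ j ∈ J, (j : ℕ) < k) :
    E ⟨k, hk⟩ ∩ histN E k J = histN E (k + 1) (insert ⟨k, hk⟩ J) := by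
  ext ω
  constructor
  · rintro ⟨hE, hH⟩ j hj
    rcases Nat.lt_succ_iff_lt_or_eq.1 hj with h | h
    · rw [hH j h]
      constructor
      · intro hjJ; exact Finset.mem_insert_of_mem hjJ
      · intro hjJ
        rcases Finset.mem_insert.1 hjJ with rfl | hjJ
        · exact absurd h (lt_irrefl _)
        · exact hjJ
    · have : j = ⟨k, hk⟩ := Fin.ext h
      subst this
      simp [hE]
  · intro hH
    have hkmem : ω ∈ E ⟨k, hk⟩ := by
      have := hH ⟨k, hk⟩ (by simp)
      simp at this
      exact this
    refine ⟨hkmem, fun j hj => ?_⟩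
    have := hH j (Nat.lt_succ_of_lt hj)
    rw [this]
    constructor
    · intro h
      rcases Finset.mem_insert.1 h with rfl | h
      · exact absurd hj (lt_irrefl _)
      · exact h
    · exact Finset.mem_insert_of_mem

lemma histN_succ_diff (E : Fin n → Set Ω) {k : ℕ} (hk : k < n) {J : Finset (Fin n)}
    (hJ : ∀ j ∈ J, (j : ℕ) < k) :
    histN E k J \ E ⟨k, hk⟩ = histN E (k + 1) J := by
  ext ω
  constructor
  · rintro ⟨hH, hE⟩ j hj
    rcases Nat.lt_succ_iff_lt_or_eq.1 hj with h | h
    · exact hH j h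
    · have : j = ⟨k, hk⟩ := Fin.ext h
      subst this
      constructor
      · intro h'; exact absurd h' hE
      · intro h'; exact absurd (hJ _ h') (lt_irrefl _)
  · intro hH
    have hkn : ω ∉ E ⟨k, hk⟩ := by
      intro h
      have := (hH ⟨k, hk⟩ (by simp)).1 h
      exact absurd (hJ _ this) (lt_irrefl _)
    exact ⟨fun j hj => hH j (Nat.lt_succ_of_lt hj), hkn⟩

lemma histN_measure_split (μ : Measure Ω) {E : Fin n → Set Ω}
    (hmeas : ∀ i, MeasurableSet (E i)) {k : ℕ} (hk : k < n) {J : Finset (Fin n)}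
    (hJ : ∀ j ∈ J, (j : ℕ) < k) :
    μ (histN E k J) = μ (histN E (k + 1) (insert ⟨k, hk⟩ J)) + μ (histN E (k + 1) J) := by
  rw [← histN_succ_inter E hk hJ, ← histN_succ_diff E hk hJ, Set.inter_comm]
  exact (measure_inter_add_diff _ (hmeas _)).symm

/-- Number of sets of `𝓘` fully contained in `J`. -/
noncomputable def sAll (𝓘 : Finset (Finset (Fin n))) (J : Finset (Fin n)) : ℕ :=
  (𝓘.filter fun I => I ⊆ J).card

/-- Sets of `𝓘` that are still "alive" at time `k` given history `J`. -/
noncomputable def alive (𝓘 : Finset (Finset (Fin n))) (k : ℕ) (J : Finset (Fin n)) :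
    Finset (Finset (Fin n)) :=
  𝓘.filter fun I => I.filter (fun i : Fin n => (i : ℕ) < k) ⊆ J

/-- Number of remaining elements of `I` at time `k`. -/
def rem (I : Finset (Fin n)) (k : ℕ) : ℕ := (I.filter fun i : Fin n => k ≤ (i : ℕ)).card

/-- Weight of a set with `r` remaining elements. -/
noncomputable def wgt (p : ℝ) (r : ℕ) : ℝ := 1 - p ^ r / 2

noncomputable def prodW (p : ℝ) (𝓘 : Finset (Finset (Fin n))) (k : ℕ)
    (J : Finset (Fin n)) : ℝ :=
  ∏ I ∈ alive 𝓘 k J, wgt p (rem I k)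

lemma wgt_nonneg {p : ℝ} (hp : 0 < p) (hp1 : p ≤ 1) (r : ℕ) : 0 ≤ wgt p r := by
  have : p ^ r ≤ 1 := pow_le_one₀ hp.le hp1
  unfold wgt; linarith

lemma prodW_nonneg {p : ℝ} (hp : 0 < p) (hp1 : p ≤ 1) (𝓘 : Finset (Finset (Fin n)))
    (k : ℕ) (J : Finset (Fin n)) : 0 ≤ prodW p 𝓘 k J :=
  Finset.prod_nonneg fun I _ => wgt_nonneg hp hp1 _

end Aux

section Comb

variable {n : ℕ}

lemma alive_succ_insert (𝓘 : Finset (Finset (Fin n))) {k : ℕ} (hk : k < n)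
    {J : Finset (Fin n)} (hJ : ∀ j ∈ J, (j : ℕ) < k) :
    alive 𝓘 (k + 1) (insert ⟨k, hk⟩ J) = alive 𝓘 k J := by
  unfold alive
  apply Finset.filter_congr
  intro I _
  constructor
  · intro h i hi
    have hi' := Finset.mem_filter.1 hi
    have : i ∈ insert (⟨k, hk⟩ : Fin n) J := h (Finset.mem_filter.2 ⟨hi'.1, Nat.lt_succ_of_lt hi'.2⟩)
    rcases Finset.mem_insert.1 this with rfl | h'
    · exact absurd hi'.2 (lt_irrefl _)
    · exact h'
  · intro h i hi
    have hi' := Finset.mem_filter.1 hi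
    rcases Nat.lt_succ_iff_lt_or_eq.1 hi'.2 with h' | h'
    · exact Finset.mem_insert_of_mem (h (Finset.mem_filter.2 ⟨hi'.1, h'⟩))
    · have : i = ⟨k, hk⟩ := Fin.ext h'
      subst this
      exact Finset.mem_insert_self _ _

lemma alive_succ_same (𝓘 : Finset (Finset (Fin n))) {k : ℕ} (hk : k < n)
    {J : Finset (Fin n)} (hJ : ∀ j ∈ J, (j : ℕ) < k) :
    alive 𝓘 (k + 1) J = (alive 𝓘 k J).filter fun I => (⟨k, hk⟩ : Fin n) ∉ I := by
  unfold alive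
  rw [Finset.filter_filter]
  apply Finset.filter_congr
  intro I _
  constructor
  · intro h
    constructor
    · intro i hi
      have hi' := Finset.mem_filter.1 hi
      exact h (Finset.mem_filter.2 ⟨hi'.1, Nat.lt_succ_of_lt hi'.2⟩)
    · intro hkI
      have : (⟨k, hk⟩ : Fin n) ∈ J := h (Finset.mem_filter.2 ⟨hkI, by simp⟩)
      exact absurd (hJ _ this) (lt_irrefl _)
  · rintro ⟨h, hkI⟩ i hi
    have hi' := Finset.mem_filter.1 hi
    rcases Nat.lt_succ_iff_lt_or_eq.1 hi'.2 with h' | h'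
    · exact h (Finset.mem_filter.2 ⟨hi'.1, h'⟩)
    · have : i = ⟨k, hk⟩ := Fin.ext h'
      subst this
      exact absurd hi'.1 hkI

lemma rem_succ_of_notMem {I : Finset (Fin n)} {k : ℕ} (hk : k < n)
    (h : (⟨k, hk⟩ : Fin n) ∉ I) : rem I (k + 1) = rem I k := by
  unfold rem
  congr 1
  apply Finset.filter_congr
  intro i hi
  constructor
  · intro h'; omega
  · intro h'
    rcases Nat.lt_or_ge k (i : ℕ) with h'' | h''
    · omega
    · have hik : i = (⟨k, hk⟩ : Fin n) := Fin.ext (le_antisymm h'' h')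
      exact absurd (hik ▸ hi) h

lemma rem_succ_of_mem {I : Finset (Fin n)} {k : ℕ} (hk : k < n)
    (h : (⟨k, hk⟩ : Fin n) ∈ I) : rem I k = rem I (k + 1) + 1 := by
  unfold rem
  have : I.filter (fun i : Fin n => k ≤ (i : ℕ)) =
      insert ⟨k, hk⟩ (I.filter fun i : Fin n => k + 1 ≤ (i : ℕ)) := by
    ext i
    simp only [Finset.mem_filter, Finset.mem_insert]
    constructor
    · rintro ⟨hiI, hik⟩
      rcases Nat.eq_or_lt_of_le hik with h' | h'
      · left; exact Fin.ext h'.symm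
      · right; exact ⟨hiI, h'⟩
    · rintro (rfl | ⟨hiI, hik⟩)
      · exact ⟨h, le_refl _⟩
      · exact ⟨hiI, Nat.le_of_succ_le hik⟩
  rw [this, Finset.card_insert_of_notMem (by simp)]

lemma rem_zero_iff (I : Finset (Fin n)) : rem I n = 0 := by
  unfold rem
  rw [Finset.card_eq_zero]
  ext i
  simp only [Finset.mem_filter, Finset.notMem_empty, iff_false]
  rintro ⟨-, h⟩
  exact absurd i.isLt (not_lt.2 h)

lemma alive_n (𝓘 : Finset (Finset (Fin n))) (J : Finset (Fin n)) :
    alive 𝓘 n J = 𝓘.filter fun I => I ⊆ J := by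
  unfold alive
  apply Finset.filter_congr
  intro I _
  have : I.filter (fun i : Fin n => (i : ℕ) < n) = I := by
    apply Finset.filter_true_of_mem
    intro i _; exact i.isLt
  rw [this]

lemma alive_zero (𝓘 : Finset (Finset (Fin n))) :
    alive 𝓘 0 (∅ : Finset (Fin n)) = 𝓘 := by
  unfold alive
  apply Finset.filter_true_of_mem
  intro I _
  have : I.filter (fun i : Fin n => (i : ℕ) < 0) = ∅ := by
    ext i; simp
  rw [this]

lemma rem_zero_eq_card (I : Finset (Fin n)) : rem I 0 = I.card := by
  unfold rem
  congr 1
  apply Finset.filter_true_of_mem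
  intro i _; exact Nat.zero_le _

end Comb

section Key

variable {Ω : Type*} [MeasurableSpace Ω] {n : ℕ}

lemma key_ineq {p F S : ℝ} (hp : 0 < p) (hF : 0 ≤ F) (hS : 0 ≤ S)
    (hps : p * (S + F) ≤ S) (r' : ℕ) :
    F + S * wgt p r' ≤ (S + F) * wgt p (r' + 1) := by
  unfold wgt
  rw [pow_succ]
  nlinarith [mul_le_mul_of_nonneg_right hps (pow_nonneg hp.le r')]

lemma key_induction (μ : Measure Ω) [IsProbabilityMeasure μ] (E : Fin n → Set Ω)
    (hmeas : ∀ i, MeasurableSet (E i)) {p : ℝ} (hp : 0 < p) (hp1 : p ≤ 1)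
    (𝓘 : Finset (Finset (Fin n)))
    (hdisj : ∀ I ∈ 𝓘, ∀ I' ∈ 𝓘, I ≠ I' → Disjoint I I')
    (hcond : ∀ I ∈ 𝓘, ∀ k ∈ I, ∀ J ⊆ Finset.Iio k, Finset.Iio k ∩ I ⊆ J →
      ENNReal.ofReal p * μ (histEvent E k J) ≤ μ (E k ∩ histEvent E k J))
    (d : ℕ) :
    ∀ k, k + d = n → ∀ J : Finset (Fin n), (∀ j ∈ J, (j : ℕ) < k) →
      ∑ K ∈ ((Finset.univ : Finset (Fin n)).filter fun j : Fin n => k ≤ (j : ℕ)).powerset,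
        (μ (histN E n (J ∪ K))).toReal * (1 / 2 : ℝ) ^ (sAll 𝓘 (J ∪ K))
      ≤ (μ (histN E k J)).toReal * prodW p 𝓘 k J := by
  induction d with
  | zero =>
    intro k hk J hJ
    have hkn : k = n := by omega
    subst hkn
    have hempty : ((Finset.univ : Finset (Fin k)).filter fun j : Fin k => k ≤ (j : ℕ)) = ∅ := by
      ext j
      simp only [Finset.mem_filter, Finset.mem_univ, true_and, Finset.notMem_empty,
        iff_false]
      exact fun h => absurd j.isLt (not_lt.2 h)
    rw [hempty, Finset.powerset_empty, Finset.sum_singleton, Finset.union_empty]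
    have hprod : prodW p 𝓘 k J = (1 / 2 : ℝ) ^ (sAll 𝓘 J) := by
      unfold prodW
      have h1 : ∀ I ∈ alive 𝓘 k J, wgt p (rem I k) = 1 / 2 := by
        intro I _
        rw [rem_zero_iff]
        unfold wgt
        norm_num
      rw [Finset.prod_congr rfl h1, Finset.prod_const, alive_n]
      rfl
    rw [hprod]
  | succ d ih =>
    intro k hk J hJ
    have hkn : k < n := by omega
    set kf : Fin n := ⟨k, hkn⟩ with hkf
    -- split the index set
    have hsplit : ((Finset.univ : Finset (Fin n)).filter fun j : Fin n => k ≤ (j : ℕ)) =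
        insert kf ((Finset.univ : Finset (Fin n)).filter fun j : Fin n => k + 1 ≤ (j : ℕ)) := by
      ext j
      simp only [Finset.mem_filter, Finset.mem_univ, true_and, Finset.mem_insert,
        Fin.ext_iff, hkf]
      omega
    have hnotmem : kf ∉ ((Finset.univ : Finset (Fin n)).filter fun j : Fin n => k + 1 ≤ (j : ℕ)) := by
      simp [hkf]
    rw [hsplit, Finset.sum_powerset_insert hnotmem]
    -- rewrite second sum
    have hsum2 : ∑ K ∈ ((Finset.univ : Finset (Fin n)).filter fun j : Fin n => k + 1 ≤ (j : ℕ)).powerset,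
          (μ (histN E n (J ∪ insert kf K))).toReal * (1 / 2 : ℝ) ^ (sAll 𝓘 (J ∪ insert kf K))
        = ∑ K ∈ ((Finset.univ : Finset (Fin n)).filter fun j : Fin n => k + 1 ≤ (j : ℕ)).powerset,
          (μ (histN E n ((insert kf J) ∪ K))).toReal * (1 / 2 : ℝ) ^ (sAll 𝓘 ((insert kf J) ∪ K)) := by
      refine Finset.sum_congr rfl fun K _ => ?_
      have : J ∪ insert kf K = (insert kf J) ∪ K := by
        ext j; simp only [Finset.mem_union, Finset.mem_insert]; tauto
      rw [this]
    rw [hsum2]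
    have hJ1 : ∀ j ∈ J, (j : ℕ) < k + 1 := fun j hj => Nat.lt_succ_of_lt (hJ j hj)
    have hJ2 : ∀ j ∈ insert kf J, (j : ℕ) < k + 1 := by
      intro j hj
      rcases Finset.mem_insert.1 hj with rfl | hj
      · simp [hkf]
      · exact Nat.lt_succ_of_lt (hJ j hj)
    have h1 := ih (k + 1) (by omega) J hJ1
    have h2 := ih (k + 1) (by omega) (insert kf J) hJ2
    -- measure split
    set νA := (μ (histN E k J)).toReal with hνA
    set νS := (μ (histN E (k + 1) (insert kf J))).toReal with hνS
    set νF := (μ (histN E (k + 1) J)).toReal with hνF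
    have hAsplit : νA = νS + νF := by
      rw [hνA, hνS, hνF, histN_measure_split μ hmeas hkn hJ,
        ENNReal.toReal_add (measure_ne_top μ _) (measure_ne_top μ _)]
    have hFnn : 0 ≤ νF := ENNReal.toReal_nonneg
    have hSnn : 0 ≤ νS := ENNReal.toReal_nonneg
    by_cases hex : ∃ I ∈ alive 𝓘 k J, kf ∈ I
    · -- some alive set contains kf
      obtain ⟨I₀, hI₀a, hkI₀⟩ := hex
      have hI₀ : I₀ ∈ 𝓘 := (Finset.mem_filter.1 hI₀a).1
      have hI₀sub : I₀.filter (fun i : Fin n => (i : ℕ) < k) ⊆ J :=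
        (Finset.mem_filter.1 hI₀a).2
      -- erased product
      set C : ℝ := ∏ I ∈ (alive 𝓘 k J).erase I₀, wgt p (rem I k) with hC
      have hCnn : 0 ≤ C := Finset.prod_nonneg fun I _ => wgt_nonneg hp hp1 _
      -- other alive sets do not contain kf
      have hother : ∀ I ∈ (alive 𝓘 k J).erase I₀, kf ∉ I := by
        intro I hI hkI
        have hI' : I ∈ 𝓘 := (Finset.mem_filter.1 (Finset.mem_of_mem_erase hI)).1
        have hne' : I ≠ I₀ := Finset.ne_of_mem_erase hI
        exact (Finset.disjoint_left.1 (hdisj I hI' I₀ hI₀ hne')) hkI hkI₀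
      set r' : ℕ := rem I₀ (k + 1) with hr'
      have hremI₀ : rem I₀ k = r' + 1 := rem_succ_of_mem hkn hkI₀
      -- the three products
      have hPk : prodW p 𝓘 k J = C * wgt p (r' + 1) := by
        unfold prodW
        rw [← Finset.prod_erase_mul _ _ hI₀a, hremI₀]
      have hPsucc : prodW p 𝓘 (k + 1) (insert kf J) = C * wgt p r' := by
        unfold prodW
        rw [alive_succ_insert 𝓘 hkn hJ, ← Finset.prod_erase_mul _ _ hI₀a]
        congr 1
        refine Finset.prod_congr rfl fun I hI => ?_
        rw [rem_succ_of_notMem hkn (hother I hI)]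
      have hPfail : prodW p 𝓘 (k + 1) J = C := by
        unfold prodW
        rw [alive_succ_same 𝓘 hkn hJ]
        have : (alive 𝓘 k J).filter (fun I => kf ∉ I) = (alive 𝓘 k J).erase I₀ := by
          ext I
          simp only [Finset.mem_filter, Finset.mem_erase]
          constructor
          · rintro ⟨hI, hkI⟩
            refine ⟨fun h => hkI (h ▸ hkI₀), hI⟩
          · rintro ⟨hne', hI⟩
            exact ⟨hI, hother I (Finset.mem_erase.2 ⟨hne', hI⟩)⟩
        rw [this]
        refine Finset.prod_congr rfl fun I hI => ?_
        rw [rem_succ_of_notMem hkn (hother I hI)]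
      -- conditional probability bound
      have hps : p * νA ≤ νS := by
        have hcond' := hcond I₀ hI₀ kf hkI₀ J
          (fun j hj => Finset.mem_Iio.2 (by exact_mod_cast hJ j hj))
          (by
            intro j hj
            obtain ⟨hj1, hj2⟩ := Finset.mem_inter.1 hj
            exact hI₀sub (Finset.mem_filter.2 ⟨hj2, by exact_mod_cast Finset.mem_Iio.1 hj1⟩))
        rw [histEvent_eq_histN] at hcond'
        have hkval : ((kf : Fin n) : ℕ) = k := rfl
        rw [hkval] at hcond'
        rw [histN_succ_inter E hkn hJ] at hcond'
        have := ENNReal.toReal_mono (measure_ne_top μ _) hcond'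
        rwa [ENNReal.toReal_mul, ENNReal.toReal_ofReal hp.le] at this
      calc
        (∑ K ∈ ((Finset.univ : Finset (Fin n)).filter fun j : Fin n => k + 1 ≤ (j : ℕ)).powerset,
            (μ (histN E n (J ∪ K))).toReal * (1 / 2 : ℝ) ^ (sAll 𝓘 (J ∪ K)))
          + ∑ K ∈ ((Finset.univ : Finset (Fin n)).filter fun j : Fin n => k + 1 ≤ (j : ℕ)).powerset,
            (μ (histN E n ((insert kf J) ∪ K))).toReal * (1 / 2 : ℝ) ^ (sAll 𝓘 ((insert kf J) ∪ K))
            ≤ νF * prodW p 𝓘 (k + 1) J + νS * prodW p 𝓘 (k + 1) (insert kf J) := by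
              exact add_le_add h1 h2
        _ = νF * C + νS * (C * wgt p r') := by rw [hPfail, hPsucc]
        _ = C * (νF + νS * wgt p r') := by ring
        _ ≤ C * ((νS + νF) * wgt p (r' + 1)) := by
              refine mul_le_mul_of_nonneg_left ?_ hCnn
              refine key_ineq hp hFnn hSnn ?_ r'
              rw [← hAsplit]; exact hps
        _ = νA * prodW p 𝓘 k J := by rw [hPk, hAsplit]; ring
    · -- no alive set contains kf
      push_neg at hex
      have hPfail : prodW p 𝓘 (k + 1) J = prodW p 𝓘 k J := by
        unfold prodW
        rw [alive_succ_same 𝓘 hkn hJ]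
        have : (alive 𝓘 k J).filter (fun I => kf ∉ I) = alive 𝓘 k J :=
          Finset.filter_true_of_mem hex
        rw [this]
        exact Finset.prod_congr rfl fun I hI => by
          rw [rem_succ_of_notMem hkn (hex I hI)]
      have hPsucc : prodW p 𝓘 (k + 1) (insert kf J) = prodW p 𝓘 k J := by
        unfold prodW
        rw [alive_succ_insert 𝓘 hkn hJ]
        exact Finset.prod_congr rfl fun I hI => by
          rw [rem_succ_of_notMem hkn (hex I hI)]
      calc
        (∑ K ∈ ((Finset.univ : Finset (Fin n)).filter fun j : Fin n => k + 1 ≤ (j : ℕ)).powerset,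
            (μ (histN E n (J ∪ K))).toReal * (1 / 2 : ℝ) ^ (sAll 𝓘 (J ∪ K)))
          + ∑ K ∈ ((Finset.univ : Finset (Fin n)).filter fun j : Fin n => k + 1 ≤ (j : ℕ)).powerset,
            (μ (histN E n ((insert kf J) ∪ K))).toReal * (1 / 2 : ℝ) ^ (sAll 𝓘 ((insert kf J) ∪ K))
            ≤ νF * prodW p 𝓘 (k + 1) J + νS * prodW p 𝓘 (k + 1) (insert kf J) :=
              add_le_add h1 h2
        _ = (νS + νF) * prodW p 𝓘 k J := by rw [hPfail, hPsucc]; ring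
        _ = νA * prodW p 𝓘 k J := by rw [hAsplit]

end Key

section Final

variable {Ω : Type*} [MeasurableSpace Ω] {n : ℕ}

/-- The moment generating function bound. -/
lemma mgf_bound (μ : Measure Ω) [IsProbabilityMeasure μ] (E : Fin n → Set Ω)
    (hmeas : ∀ i, MeasurableSet (E i)) {p : ℝ} (hp : 0 < p) (hp1 : p ≤ 1)
    (a m : ℕ) (𝓘 : Finset (Finset (Fin n))) (hm : 𝓘.card = m)
    (hsize : ∀ I ∈ 𝓘, I.card ≤ a)
    (hdisj : ∀ I ∈ 𝓘, ∀ I' ∈ 𝓘, I ≠ I' → Disjoint I I')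
    (hcond : ∀ I ∈ 𝓘, ∀ k ∈ I, ∀ J ⊆ Finset.Iio k, Finset.Iio k ∩ I ⊆ J →
      ENNReal.ofReal p * μ (histEvent E k J) ≤ μ (E k ∩ histEvent E k J)) :
    ∑ K ∈ (Finset.univ : Finset (Fin n)).powerset,
        (μ (histN E n K)).toReal * (1 / 2 : ℝ) ^ (sAll 𝓘 K)
      ≤ (1 - p ^ a / 2) ^ m := by
  have h0 := key_induction μ E hmeas hp hp1 𝓘 hdisj hcond n 0 (by omega)
    (∅ : Finset (Fin n)) (by simp)
  have hfull : ((Finset.univ : Finset (Fin n)).filter fun j : Fin n => 0 ≤ (j : ℕ)) =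
      Finset.univ := Finset.filter_true_of_mem fun j _ => Nat.zero_le _
  rw [hfull] at h0
  simp only [Finset.empty_union] at h0
  have huniv : histN E 0 (∅ : Finset (Fin n)) = Set.univ := by
    ext ω; simp [histN]
  rw [huniv, measure_univ] at h0
  simp only [ENNReal.toReal_one, one_mul] at h0
  refine le_trans h0 ?_
  have hP : prodW p 𝓘 0 (∅ : Finset (Fin n)) = ∏ I ∈ 𝓘, wgt p I.card := by
    unfold prodW
    rw [alive_zero]
    exact Finset.prod_congr rfl fun I _ => by rw [rem_zero_eq_card]
  rw [hP, ← hm, ← Finset.prod_const]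
  refine Finset.prod_le_prod (fun I _ => wgt_nonneg hp hp1 _) fun I hI => ?_
  unfold wgt
  have : p ^ a ≤ p ^ I.card := pow_le_pow_of_le_one hp.le hp1 (hsize I hI)
  linarith

/-- The key numeric estimate. -/
lemma numeric_bound {q : ℝ} (hq : 0 < q) (hq1 : q ≤ 1) (m : ℕ) :
    (2 : ℝ) ^ ((1 / 2 * q * m : ℝ)) * (1 - q / 2) ^ m ≤
      2 * Real.exp (-(1 / 12) * q * m) := by
  have hqm : (0 : ℝ) ≤ q * m := mul_nonneg hq.le (Nat.cast_nonneg m)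
  have h1 : (2 : ℝ) ^ ((1 / 2 * q * m : ℝ)) = Real.exp (Real.log 2 * (1 / 2 * q * m)) := by
    rw [Real.rpow_def_of_pos two_pos]
  have h2 : (1 - q / 2) ^ m ≤ Real.exp (-(q / 2)) ^ m := by
    refine pow_le_pow_left₀ (by linarith) ?_ m
    linarith [Real.add_one_le_exp (-(q / 2))]
  have h3 : Real.exp (-(q / 2)) ^ m = Real.exp ((m : ℝ) * (-(q / 2))) := by
    rw [Real.exp_nat_mul]
  calc (2 : ℝ) ^ ((1 / 2 * q * m : ℝ)) * (1 - q / 2) ^ m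
      ≤ Real.exp (Real.log 2 * (1 / 2 * q * m)) * Real.exp ((m : ℝ) * (-(q / 2))) := by
        rw [h1]
        refine mul_le_mul_of_nonneg_left (h2.trans h3.le) (Real.exp_nonneg _)
    _ = Real.exp (Real.log 2 * (1 / 2 * q * m) + (m : ℝ) * (-(q / 2))) := by
        rw [← Real.exp_add]
    _ ≤ Real.exp (-(1 / 12) * q * m) := by
        refine Real.exp_le_exp.2 ?_
        have hl : Real.log 2 ≤ 5 / 6 := by linarith [Real.log_two_lt_d9]
        nlinarith [mul_le_mul_of_nonneg_right (show Real.log 2 - 1 ≤ -(1/6) by linarith) hqm]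
    _ ≤ 2 * Real.exp (-(1 / 12) * q * m) := by
        nlinarith [Real.exp_pos (-(1 / 12) * q * m)]

end Final

/-- Chernoff-type bound for tuples: let `𝓘` be a collection of `m` pairwise disjoint
nonempty subsets of `[n]`, each of size at most `a`. If for every `I ∈ 𝓘` and `k ∈ I`,
the probability that `A_k = 1`, conditioned on any outcome of `A₁,…,A_{k−1}` in which all
variables indexed by `[k−1] ∩ I` equal `1`, is at least `p`, then with probability at
least `1 − 2·exp(−(1/12)pᵃm)` at least `(1/2)pᵃm` of the sets `I ∈ 𝓘` have `Aᵢ = 1` for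
all `i ∈ I`. -/
theorem pseudo_chernoff_tuples {Ω : Type*} [MeasurableSpace Ω] (μ : Measure Ω)
    [IsProbabilityMeasure μ] {n : ℕ} (E : Fin n → Set Ω)
    (hmeas : ∀ i, MeasurableSet (E i))
    (p : ℝ) (hp : 0 < p) (a m : ℕ) (𝓘 : Finset (Finset (Fin n)))
    (hm : 𝓘.card = m)
    (hne : ∀ I ∈ 𝓘, I.Nonempty)
    (hsize : ∀ I ∈ 𝓘, I.card ≤ a)
    (hdisj : ∀ I ∈ 𝓘, ∀ I' ∈ 𝓘, I ≠ I' → Disjoint I I')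
    (hcond : ∀ I ∈ 𝓘, ∀ k ∈ I, ∀ J ⊆ Finset.Iio k, Finset.Iio k ∩ I ⊆ J →
      ENNReal.ofReal p * μ (histEvent E k J) ≤ μ (E k ∩ histEvent E k J)) :
    ENNReal.ofReal (1 - 2 * Real.exp (-(1 / 12) * p ^ a * m)) ≤
      μ { ω | (1 / 2 : ℝ) * p ^ a * m ≤
          ((𝓘.filter fun I => ∀ i ∈ I, ω ∈ E i).card : ℝ) } := by
  rcases le_or_gt p 1 with hp1 | hp1
  swap
  · -- p > 1 : then 𝓘 must be empty
    have h𝓘 : 𝓘 = ∅ := by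
      by_contra hne'
      obtain ⟨I, hI⟩ := Finset.nonempty_iff_ne_empty.2 hne'
      have hIne := hne I hI
      set k := I.min' hIne with hkdef
      have hk : k ∈ I := Finset.min'_mem _ _
      have hzero : ∀ J ∈ (Finset.Iio k).powerset, μ (histEvent E k J) = 0 := by
        intro J hJ
        have hint : Finset.Iio k ∩ I ⊆ J := by
          intro j hj
          exfalso
          obtain ⟨h1, h2⟩ := Finset.mem_inter.1 hj
          exact absurd (Finset.min'_le I j h2) (not_le.2 (Finset.mem_Iio.1 h1))
        have h := hcond I hI k hk J (Finset.mem_powerset.1 hJ) hint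
        have h2 : μ (E k ∩ histEvent E k J) ≤ μ (histEvent E k J) :=
          measure_mono Set.inter_subset_right
        by_contra hne0
        have hxpos : 0 < (μ (histEvent E k J)).toReal :=
          ENNReal.toReal_pos hne0 (measure_ne_top μ _)
        have hr1 : p * (μ (histEvent E k J)).toReal ≤ (μ (E k ∩ histEvent E k J)).toReal := by
          have := ENNReal.toReal_mono (measure_ne_top μ _) h
          rwa [ENNReal.toReal_mul, ENNReal.toReal_ofReal hp.le] at this
        have hr2 : (μ (E k ∩ histEvent E k J)).toReal ≤ (μ (histEvent E k J)).toReal :=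
          ENNReal.toReal_mono (measure_ne_top μ _) h2
        nlinarith
      have hcover : (Set.univ : Set Ω) ⊆ ⋃ J ∈ (Finset.Iio k).powerset, histEvent E k J := by
        intro ω _
        refine Set.mem_iUnion₂.2 ⟨(Finset.Iio k).filter fun j => ω ∈ E j, ?_, ?_⟩
        · exact Finset.mem_powerset.2 (Finset.filter_subset _ _)
        · intro j hj
          simp [Finset.mem_filter, Finset.mem_Iio, hj]
      have hcontra : (1 : ℝ≥0∞) ≤ 0 := by
        calc (1 : ℝ≥0∞) = μ Set.univ := measure_univ.symm
          _ ≤ μ (⋃ J ∈ (Finset.Iio k).powerset, histEvent E k J) := measure_mono hcover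
          _ ≤ ∑ J ∈ (Finset.Iio k).powerset, μ (histEvent E k J) :=
              measure_biUnion_finset_le _ _
          _ = 0 := Finset.sum_eq_zero hzero
      simp at hcontra
    have hm0 : m = 0 := by rw [← hm, h𝓘]; rfl
    subst hm0
    have : -(1 / 12 : ℝ) * p ^ a * (0 : ℕ) = 0 := by simp
    rw [this, Real.exp_zero]
    norm_num
  · -- main case : p ≤ 1
    set q : ℝ := p ^ a with hqdef
    have hq : 0 < q := pow_pos hp a
    have hq1 : q ≤ 1 := pow_le_one₀ hp.le hp1
    set T : Set Ω := { ω | (1 / 2 : ℝ) * p ^ a * m ≤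
        ((𝓘.filter fun I => ∀ i ∈ I, ω ∈ E i).card : ℝ) } with hTdef
    -- count is constant on atoms
    have hS_eq : ∀ K : Finset (Fin n), ∀ ω ∈ histN E n K,
        (𝓘.filter fun I => ∀ i ∈ I, ω ∈ E i).card = sAll 𝓘 K := by
      intro K ω hω
      unfold sAll
      congr 1
      apply Finset.filter_congr
      intro I _
      constructor
      · intro h i hi
        exact (hω i i.isLt).1 (h i hi)
      · intro h i hi
        exact (hω i i.isLt).2 (h hi)
    -- atoms are pairwise disjoint
    have hpd : (((Finset.univ : Finset (Fin n)).powerset : Finset (Finset (Fin n))) :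
        Set (Finset (Fin n))).PairwiseDisjoint (histN E n ·) := by
      intro K hK K' hK' hne'
      refine Set.disjoint_left.2 fun ω h1 h2 => hne' ?_
      ext j
      rw [← h1 j j.isLt, ← h2 j j.isLt]
    set bad : Finset (Finset (Fin n)) :=
      (Finset.univ : Finset (Fin n)).powerset.filter
        fun K => ((sAll 𝓘 K : ℝ) < 1 / 2 * p ^ a * m) with hbaddef
    have hbadsub : bad ⊆ (Finset.univ : Finset (Fin n)).powerset := Finset.filter_subset _ _
    have hTc : Tᶜ = ⋃ K ∈ bad, histN E n K := by
      ext ω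
      constructor
      · intro hlt
        have hlt' : ((𝓘.filter fun I => ∀ i ∈ I, ω ∈ E i).card : ℝ) < 1 / 2 * p ^ a * m :=
          not_le.1 hlt
        have hωmem : ω ∈ histN E n ((Finset.univ : Finset (Fin n)).filter fun i => ω ∈ E i) := by
          intro j _
          simp
        have hKbad : ((Finset.univ : Finset (Fin n)).filter fun i => ω ∈ E i) ∈ bad := by
          rw [hbaddef]
          refine Finset.mem_filter.2 ⟨Finset.mem_powerset.2 (Finset.subset_univ _), ?_⟩
          have hcard := hS_eq _ ω hωmem
          rw [← hcard]
          exact hlt'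
        exact Set.mem_biUnion hKbad hωmem
      · intro hmem
        obtain ⟨K, hK, hω⟩ := Set.mem_iUnion₂.1 hmem
        have hKbad := Finset.mem_filter.1 hK
        have hcard := hS_eq K ω hω
        intro hle
        rw [hTdef] at hle
        simp only [Set.mem_setOf_eq] at hle
        rw [hcard] at hle
        exact absurd hle (not_le.2 hKbad.2)
    have hTcMeas : MeasurableSet (⋃ K ∈ bad, histN E n K) :=
      Finset.measurableSet_biUnion _ fun K _ => measurableSet_histN hmeas _ _
    have hTmeas : MeasurableSet T := by
      have hc : MeasurableSet Tᶜ := hTc ▸ hTcMeas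
      simpa using hc.compl
    have hμTc : μ Tᶜ = ∑ K ∈ bad, μ (histN E n K) := by
      rw [hTc]
      exact measure_biUnion_finset (hpd.subset (by exact_mod_cast hbadsub))
        fun K _ => measurableSet_histN hmeas _ _
    have hνTc : (μ Tᶜ).toReal = ∑ K ∈ bad, (μ (histN E n K)).toReal := by
      rw [hμTc, ENNReal.toReal_sum fun K _ => measure_ne_top μ _]
    set c2 : ℝ := (2 : ℝ) ^ ((1 / 2 * q * m : ℝ)) with hc2def
    have hc2nn : (0 : ℝ) ≤ c2 := (Real.rpow_pos_of_pos two_pos _).le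
    have hterm : ∀ K ∈ bad, (μ (histN E n K)).toReal ≤
        c2 * ((μ (histN E n K)).toReal * (1 / 2 : ℝ) ^ (sAll 𝓘 K)) := by
      intro K hK
      have hKs : ((sAll 𝓘 K : ℕ) : ℝ) < 1 / 2 * p ^ a * m := (Finset.mem_filter.1 hK).2
      have h2s : (2 : ℝ) ^ ((sAll 𝓘 K : ℕ) : ℝ) ≤ c2 := by
        rw [hc2def]
        exact (Real.rpow_le_rpow_left_iff one_lt_two).2 (le_of_lt (by rw [hqdef]; exact hKs))
      have hpow : (1 / 2 : ℝ) ^ (sAll 𝓘 K) = ((2 : ℝ) ^ (((sAll 𝓘 K : ℕ)) : ℝ))⁻¹ := by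
        rw [Real.rpow_natCast, one_div, inv_pow]
      have hone : (1 : ℝ) ≤ c2 * (1 / 2 : ℝ) ^ (sAll 𝓘 K) := by
        rw [hpow, ← div_eq_mul_inv]
        exact (one_le_div (Real.rpow_pos_of_pos two_pos _)).2 h2s
      calc (μ (histN E n K)).toReal = (μ (histN E n K)).toReal * 1 := (mul_one _).symm
        _ ≤ (μ (histN E n K)).toReal * (c2 * (1 / 2 : ℝ) ^ (sAll 𝓘 K)) :=
            mul_le_mul_of_nonneg_left hone ENNReal.toReal_nonneg
        _ = c2 * ((μ (histN E n K)).toReal * (1 / 2 : ℝ) ^ (sAll 𝓘 K)) := by ring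
    have hchain : (μ Tᶜ).toReal ≤ 2 * Real.exp (-(1 / 12) * q * m) := by
      calc (μ Tᶜ).toReal = ∑ K ∈ bad, (μ (histN E n K)).toReal := hνTc
        _ ≤ ∑ K ∈ bad, c2 * ((μ (histN E n K)).toReal * (1 / 2 : ℝ) ^ (sAll 𝓘 K)) :=
            Finset.sum_le_sum hterm
        _ = c2 * ∑ K ∈ bad, (μ (histN E n K)).toReal * (1 / 2 : ℝ) ^ (sAll 𝓘 K) := by
            rw [Finset.mul_sum]
        _ ≤ c2 * ∑ K ∈ (Finset.univ : Finset (Fin n)).powerset,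
              (μ (histN E n K)).toReal * (1 / 2 : ℝ) ^ (sAll 𝓘 K) := by
            refine mul_le_mul_of_nonneg_left ?_ hc2nn
            refine Finset.sum_le_sum_of_subset_of_nonneg hbadsub fun K _ _ => ?_
            positivity
        _ ≤ c2 * (1 - p ^ a / 2) ^ m := by
            refine mul_le_mul_of_nonneg_left ?_ hc2nn
            exact mgf_bound μ E hmeas hp hp1 a m 𝓘 hm hsize hdisj hcond
        _ ≤ 2 * Real.exp (-(1 / 12) * q * m) := by
            rw [hc2def, hqdef]
            exact numeric_bound hq hq1 m
    have hadd : μ T + μ Tᶜ = 1 := prob_add_prob_compl hTmeas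
    have haddr : (μ T).toReal + (μ Tᶜ).toReal = 1 := by
      rw [← ENNReal.toReal_add (measure_ne_top μ _) (measure_ne_top μ _), hadd]
      rfl
    refine ENNReal.ofReal_le_of_le_toReal ?_
    rw [hqdef] at hchain
    linarith
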